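/- Let m ≥ 3, let P and Q be symmetric 2-index arrays on ℝ^m and let v ∈ ℝ^m with v ≠ 0. If D(P,v) = 0 and D(Q,v) = 0, then P and Q commute: Σ_l P_{il}Q_{lj} = Σ_l Q_{il}P_{lj} for all i, j. -/

import Mathlib

/-- The Kronecker delta on `Fin m`, regarded as a real 2-index array. -/
def kdelta (m : ℕ) (i j : Fin m) : ℝ := if i = j then 1 else 0

/-- The 3-index array `D(P,v)` associated with a 2-index array `P` and a vector `v`:
`D(P,v)_{ijk} = (1/(m−2))·[ v_k P_{ij} − v_j P_{ik}
  + (1/(m−1))·Σ_l v_l (P_{lk}δ_{ij} − P_{lj}δ_{ik})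
  − ((Σ_l P_{ll})/(m−1))·(v_kδ_{ij} − v_jδ_{ik}) ]`. -/
noncomputable def Dt (m : ℕ) (P : Fin m → Fin m → ℝ) (v : Fin m → ℝ)
    (i j k : Fin m) : ℝ :=
  (1 / ((m : ℝ) - 2)) *
    (v k * P i j - v j * P i k
      + (1 / ((m : ℝ) - 1)) * ∑ l, v l * (P l k * kdelta m i j - P l j * kdelta m i k)
      - ((∑ l, P l l) / ((m : ℝ) - 1)) * (v k * kdelta m i j - v j * kdelta m i k))

/-! Up to its normalising factor, `D(P,v) = 0` says `v ∧ P = c ∧ δ` for the vector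
`c = (tr P · v − Pv)/(m − 1)`. Contracting this identity with `v` expresses `|v|² P` through
`Pv`, `c` and `v`; symmetry of `P` then forces `Pv + c ∥ v`, and together with the formula for
`c` (which is the contraction over the first two indices) this gives `c ∥ v` as soon as
`m ≠ 2`. Hence `P = a·1 + b·v vᵀ`, and any two matrices of this form commute. -/

open Matrix

theorem exists_eq_smul_of_vecMulVec_comm {K n : Type*} [Field K] {w v : n → K} (hv : v ≠ 0)
    (h : vecMulVec w v = vecMulVec v w) : ∃ μ : K, w = μ • v := by
  obtain ⟨a, ha⟩ := Function.ne_iff.mp hv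
  refine ⟨w a / v a, funext fun i => ?_⟩
  have hia := congrFun (congrFun h i) a
  simp only [vecMulVec_apply] at hia
  rw [Pi.smul_apply, smul_eq_mul, div_mul_eq_mul_div, eq_div_iff ha]
  linear_combination hia

section WedgeEq

variable {n : Type*} [Fintype n] [DecidableEq n]

/-- `v ∧ P = c ∧ 1`, the wedge taken in the last two indices. -/
def WedgeEq (P : Matrix n n ℝ) (v c : n → ℝ) : Prop :=
  ∀ i j k, v k * P i j - v j * P i k = c k * (1 : Matrix n n ℝ) i j - c j * (1 : Matrix n n ℝ) i k

variable {P : Matrix n n ℝ} {v c : n → ℝ}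

theorem WedgeEq.trace_smul_sub_vecMul (h : WedgeEq P v c) :
    P.trace • v - v ᵥ* P = ((Fintype.card n : ℝ) - 1) • c := by
  funext k
  have hsum := Finset.sum_congr rfl fun i (_ : i ∈ Finset.univ) => h i i k
  simp only [Finset.sum_sub_distrib, ← Finset.mul_sum, one_apply,
    mul_ite, mul_one, mul_zero, Finset.sum_ite_eq', Finset.mem_univ, if_true, Finset.sum_const,
    Finset.card_univ, nsmul_eq_mul] at hsum
  simp only [Pi.sub_apply, Pi.smul_apply, smul_eq_mul, trace, diag, vecMul, dotProduct]
  linear_combination hsum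

theorem WedgeEq.dotProduct_self_smul (h : WedgeEq P v c) :
    (v ⬝ᵥ v) • P = vecMulVec (P *ᵥ v) v + (v ⬝ᵥ c) • 1 - vecMulVec v c := by
  ext i j
  have hL : ∑ k, v k * (v k * P i j - v j * P i k) = (v ⬝ᵥ v) * P i j - (P *ᵥ v) i * v j := by
    simp only [dotProduct, mulVec, Finset.sum_mul, ← Finset.sum_sub_distrib]
    exact Finset.sum_congr rfl fun k _ => by ring
  have hR : ∑ k, v k * (c k * (1 : Matrix n n ℝ) i j - c j * (1 : Matrix n n ℝ) i k)
      = (v ⬝ᵥ c) * (1 : Matrix n n ℝ) i j - v i * c j := by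
    simp only [mul_sub, Finset.sum_sub_distrib, dotProduct, one_apply, mul_ite, mul_one,
      mul_zero, Finset.sum_ite_irrel, Finset.sum_const_zero, Finset.sum_ite_eq, Finset.mem_univ,
      if_true]
  have hsum := hL.symm.trans ((Finset.sum_congr rfl fun k _ => by rw [h i j k]).trans hR)
  simp only [Matrix.sub_apply, Matrix.add_apply, Matrix.smul_apply, smul_eq_mul, vecMulVec_apply]
  linear_combination hsum

theorem WedgeEq.exists_eq_smul_one_add_smul_vecMulVec (h : WedgeEq P v c) (hP : P.IsSymm)
    (hv : v ≠ 0) (hn : (Fintype.card n : ℝ) ≠ 2) :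
    ∃ a b : ℝ, P = a • 1 + b • vecMulVec v v := by
  have hS : v ⬝ᵥ v ≠ 0 := dotProduct_self_eq_zero.not.mpr hv
  have hcontr := h.dotProduct_self_smul
  obtain ⟨μ, hμ⟩ : ∃ μ : ℝ, P *ᵥ v + c = μ • v := by
    refine exists_eq_smul_of_vecMulVec_comm hv ?_
    have htr := congrArg transpose hcontr
    simp only [transpose_smul, transpose_add, transpose_sub, transpose_vecMulVec, transpose_one,
      hP.eq] at htr
    rw [add_vecMulVec, vecMulVec_add]
    linear_combination (norm := module) htr - hcontr
  have htrace := h.trace_smul_sub_vecMul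
  rw [← mulVec_transpose, hP.eq] at htrace
  set κ := (P.trace - μ) / ((Fintype.card n : ℝ) - 2)
  have hc : c = κ • v := by
    funext i
    have h1 := congrFun htrace i
    have h2 := congrFun hμ i
    simp only [Pi.sub_apply, Pi.add_apply, Pi.smul_apply, smul_eq_mul] at h1 h2 ⊢
    rw [div_mul_eq_mul_div, eq_div_iff (sub_ne_zero.mpr hn)]
    linear_combination -h1 - h2
  refine ⟨κ, (μ - 2 * κ) / (v ⬝ᵥ v), ?_⟩
  rw [hc, eq_sub_of_add_eq hμ, hc] at hcontr
  ext i j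
  have hij := congrFun (congrFun hcontr i) j
  simp only [Matrix.smul_apply, Matrix.add_apply, Matrix.sub_apply, vecMulVec_apply,
    Pi.sub_apply, Pi.smul_apply, smul_eq_mul, dotProduct_smul] at hij ⊢
  field_simp
  linear_combination hij

end WedgeEq

theorem wedgeEq_of_Dt_eq_zero {m : ℕ} (hm : (m : ℝ) ≠ 2) {P : Fin m → Fin m → ℝ}
    {v : Fin m → ℝ} (h : ∀ i j k, Dt m P v i j k = 0) :
    WedgeEq P v fun k => (trace P * v k - (v ᵥ* P) k) / ((m : ℝ) - 1) := by
  intro i j k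
  obtain h0 | h0 := mul_eq_zero.mp (h i j k)
  · exact absurd h0 (one_div_ne_zero (sub_ne_zero.mpr hm))
  have hsum : ∀ a b : Fin m, ∑ l, v l * (P l b * kdelta m i a - P l a * kdelta m i b)
      = (v ᵥ* P) b * kdelta m i a - (v ᵥ* P) a * kdelta m i b := by
    intro a b
    simp only [mul_sub, Finset.sum_sub_distrib, ← mul_assoc, ← Finset.sum_mul, vecMul, dotProduct]
  rw [hsum] at h0
  simp only [kdelta, trace, diag, ← one_apply] at h0 ⊢
  linear_combination h0

theorem commute_smul_one_add_smul {R A : Type*} [CommSemiring R] [Semiring A] [Algebra R A]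
    (M : A) (a b a' b' : R) : Commute (a • 1 + b • M) (a' • 1 + b' • M) := by
  apply Commute.add_left <;> apply Commute.add_right <;>
    apply Commute.smul_left <;> apply Commute.smul_right <;> simp

/-- If `D(P,v) = 0` and `D(Q,v) = 0` for some nonzero vector `v`, then the symmetric
arrays `P` and `Q` commute. -/
theorem commute_of_Dt_eq_zero (m : ℕ) (hm : 3 ≤ m)
    (P Q : Fin m → Fin m → ℝ)
    (hP : ∀ i j, P i j = P j i) (hQ : ∀ i j, Q i j = Q j i)
    (v : Fin m → ℝ) (hv : v ≠ 0)
    (hDP : ∀ i j k, Dt m P v i j k = 0) (hDQ : ∀ i j k, Dt m Q v i j k = 0) :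
    ∀ i j, (∑ l, P i l * Q l j) = ∑ l, Q i l * P l j := by
  have hm2 : (m : ℝ) ≠ 2 := by norm_cast; omega
  have hcard : (Fintype.card (Fin m) : ℝ) ≠ 2 := by rwa [Fintype.card_fin]
  obtain ⟨a, b, hPab⟩ := (wedgeEq_of_Dt_eq_zero hm2 hDP).exists_eq_smul_one_add_smul_vecMulVec
    (IsSymm.ext fun i j => hP j i) hv hcard
  obtain ⟨a', b', hQab⟩ := (wedgeEq_of_Dt_eq_zero hm2 hDQ).exists_eq_smul_one_add_smul_vecMulVec
    (IsSymm.ext fun i j => hQ j i) hv hcard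
  subst hPab hQab
  intro i j
  rw [← mul_apply, ← mul_apply, (commute_smul_one_add_smul (vecMulVec v v) a b a' b').eq]
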